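/- Let d ≥ 1 and let f : ℝ^d → ℝ be a bounded measurable function with f(y) ≥ 0 for all y, 0 < ∫_{ℝ^d} f(y) dy < ∞, and f(-y) = f(y) for all y ∈ ℝ^d. Let g : ℝ^d → ℝ be another bounded measurable function with g ≥ 0 and ∫_{ℝ^d} g(y) dy > 0. Then for every x ∈ ℝ^d there exists n ∈ ℕ (n ≥ 1) such that (f^{*n} * g)(x) > 0. -/

import Mathlib

open MeasureTheory

/-- Convolution `(f*g)(x) = ∫ f(x-y) g(y) dy` on Euclidean space. -/
noncomputable def conv {d : ℕ} (f g : EuclideanSpace ℝ (Fin d) → ℝ)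
    (x : EuclideanSpace ℝ (Fin d)) : ℝ :=
  ∫ y, f (x - y) * g y

/-- Auxiliary convolution iterates: `convIter f k = f^{*(k+1)}`. -/
noncomputable def convIter {d : ℕ} (f : EuclideanSpace ℝ (Fin d) → ℝ) :
    ℕ → EuclideanSpace ℝ (Fin d) → ℝ
  | 0 => f
  | n + 1 => fun x => conv (convIter f n) f x

/-- `convPow f n` is the `n`-fold convolution power `f^{*n}` (meaningful for `n ≥ 1`):
`f^{*1} = f` and `f^{*(n+1)} = f^{*n} * f`. -/
noncomputable def convPow {d : ℕ} (f : EuclideanSpace ℝ (Fin d) → ℝ) (n : ℕ) :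
    EuclideanSpace ℝ (Fin d) → ℝ :=
  convIter f (n - 1)

/-!
Write `F = ofReal ∘ f`. As `F` is symmetric, `(F ⋆ F)(z) > 0` as soon as
`{F > 0} ∩ (z + {F > 0})` has positive measure, which by the Steinhaus argument holds on a ball
`B(0, ε)`. If `A > 0` on an open set `U` and `B > 0` on an open set `V`, then `A ⋆ B > 0` on
`U + V`; since `B(0, ε) + B(0, r) = B(0, ε + r)`, the power `F^{⋆(2m+2)} = (F ⋆ F)^{⋆(m+1)}` is
positive on `B(0, (m+1)ε)`. These balls exhaust the space and `{g > 0}` has positive measure, so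
some `(g ⋆ F^{⋆n})(x)` is positive. Boundedness of `f` and `g` and integrability of `f` keep
all these `ℝ≥0∞`-valued convolutions finite, so they agree with the real convolutions `conv`.
-/

open Set Function Metric Filter Topology
open scoped ENNReal Pointwise

section AddGroup

variable {G : Type*} [AddGroup G] [MeasurableSpace G] {μ : Measure G} {A B : G → ℝ≥0∞}

theorem lconvolution_le_lintegral_mul (hA : Measurable A) {c : ℝ≥0∞} (hB : ∀ z, B z ≤ c)
    (x : G) : (A ⋆ₗ[μ] B) x ≤ (∫⁻ y, A y ∂μ) * c :=
  (lintegral_mono fun y ↦ by gcongr; exact hB _).trans_eq (lintegral_mul_const _ hA)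

theorem iterate_lconvolution_le (hA : Measurable A) {c : ℝ≥0∞} (hB : ∀ z, B z ≤ c)
    (n : ℕ) (x : G) : (A ⋆ₗ[μ] ·)^[n] B x ≤ (∫⁻ y, A y ∂μ) ^ n * c := by
  induction n generalizing x with
  | zero => simpa using hB x
  | succ n ih =>
    rw [iterate_succ_apply', pow_succ', mul_assoc]
    exact lconvolution_le_lintegral_mul hA ih x

theorem iterate_lconvolution_ne_top (hA : Measurable A) (hA_int : ∫⁻ y, A y ∂μ ≠ ∞)
    {c : ℝ≥0∞} (hc : c ≠ ∞) (hB : ∀ z, B z ≤ c) (n : ℕ) (x : G) :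
    (A ⋆ₗ[μ] ·)^[n] B x ≠ ∞ :=
  ((iterate_lconvolution_le hA hB n x).trans_lt
    (ENNReal.mul_lt_top (ENNReal.pow_lt_top hA_int.lt_top) hc.lt_top)).ne

theorem eventually_nhds_zero_measure_vadd_inter_pos [TopologicalSpace G] [IsTopologicalAddGroup G]
    [T2Space G] [LocallyCompactSpace G] [BorelSpace G] [μ.IsAddHaarMeasure] [μ.InnerRegular]
    {s : Set G} (hs : MeasurableSet s) (hμs : 0 < μ s) : ∀ᶠ z : G in 𝓝 0, 0 < μ ((z +ᵥ s) ∩ s) := by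
  obtain ⟨K, hKs, hK, hμK⟩ := hs.exists_lt_isCompact hμs
  filter_upwards [eventually_nhds_zero_measure_vadd_sdiff_lt hK hK.isClosed hμK.ne' (μ := μ)]
    with z hz
  refine (pos_iff_ne_zero.2 fun h₀ ↦ ?_).trans_le
    (measure_mono (inter_subset_inter (vadd_set_mono hKs) hKs))
  -- a null `(z +ᵥ K) ∩ K` would leave all of `μ (z +ᵥ K) = μ K` to `(z +ᵥ K) \ K`
  have := measure_le_inter_add_sdiff μ (z +ᵥ K) K
  rw [h₀, zero_add, measure_vadd] at this
  exact (this.trans_lt hz).false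

variable [MeasurableAdd₂ G] [MeasurableNeg G]

theorem lconvolution_pos_iff (hA : Measurable A) (hB : Measurable B) (x : G) :
    0 < (A ⋆ₗ[μ] B) x ↔ 0 < μ (support A ∩ (fun y ↦ -y + x) ⁻¹' support B) := by
  rw [lconvolution_def, lintegral_pos_iff_support (by fun_prop), support_mul]
  rfl

theorem exists_lconvolution_pos {ι : Type*} [Countable ι] (hA : Measurable A)
    (hA₀ : 0 < ∫⁻ y, A y ∂μ) {K : ι → G → ℝ≥0∞} (hK : ∀ i, Measurable (K i))
    {U : ι → Set G} (hU : ⋃ i, U i = univ) (hKU : ∀ i, ∀ z ∈ U i, K i z ≠ 0) (x : G) :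
    ∃ i, 0 < (A ⋆ₗ[μ] K i) x := by
  by_contra! h
  have hnull (i : ι) : μ (support A ∩ (fun y ↦ -y + x) ⁻¹' U i) = 0 := by
    refine measure_mono_null
      (inter_subset_inter_right _ (preimage_mono fun z hz ↦ mem_support.2 (hKU i z hz))) ?_
    simpa using (lconvolution_pos_iff hA (hK i) x).not.1 (h i).not_gt
  rw [lintegral_pos_iff_support hA] at hA₀
  refine hA₀.ne' (measure_mono_null (fun y hy ↦ ?_) (measure_iUnion_null hnull))
  obtain ⟨i, hi⟩ := mem_iUnion.1 (hU.symm ▸ mem_univ (-y + x))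
  exact mem_iUnion.2 ⟨i, hy, hi⟩

section Iterate

variable [SFinite μ]

theorem measurable_iterate_lconvolution (hA : Measurable A) (hB : Measurable B) (n : ℕ) :
    Measurable ((A ⋆ₗ[μ] ·)^[n] B) := by
  induction n with
  | zero => exact hB
  | succ n ih => rw [iterate_succ_apply']; exact measurable_lconvolution μ hA ih

theorem lintegral_lconvolution [μ.IsAddLeftInvariant] (hA : Measurable A)
    (hB : Measurable B) : ∫⁻ x, (A ⋆ₗ[μ] B) x ∂μ = (∫⁻ y, A y ∂μ) * ∫⁻ z, B z ∂μ := by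
  unfold lconvolution
  rw [lintegral_lintegral_swap (by fun_prop)]
  have hinner (y : G) : ∫⁻ x, A y * B (-y + x) ∂μ = A y * ∫⁻ z, B z ∂μ := by
    rw [lintegral_const_mul _ (by fun_prop), lintegral_add_left_eq_self B]
  simp_rw [hinner]
  exact lintegral_mul_const _ hA

theorem lintegral_iterate_lconvolution [μ.IsAddLeftInvariant] (hA : Measurable A)
    (hB : Measurable B) (n : ℕ) :
    ∫⁻ x, (A ⋆ₗ[μ] ·)^[n] B x ∂μ = (∫⁻ y, A y ∂μ) ^ n * ∫⁻ z, B z ∂μ := by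
  induction n with
  | zero => simp
  | succ n ih =>
    rw [iterate_succ_apply', lintegral_lconvolution hA (measurable_iterate_lconvolution hA hB n),
      ih, pow_succ', mul_assoc]

end Iterate

section Topological

variable [TopologicalSpace G] [IsTopologicalAddGroup G]

theorem lconvolution_pos_of_mem_add [μ.IsOpenPosMeasure] (hA : Measurable A)
    (hB : Measurable B) {U V : Set G} (hU : IsOpen U) (hV : IsOpen V)
    (hAU : ∀ u ∈ U, A u ≠ 0) (hBV : ∀ v ∈ V, B v ≠ 0) {z : G} (hz : z ∈ U + V) :
    0 < (A ⋆ₗ[μ] B) z := by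
  obtain ⟨u, hu, v, hv, rfl⟩ := hz
  rw [lconvolution_pos_iff hA hB]
  have hW : IsOpen (U ∩ (fun y ↦ -y + (u + v)) ⁻¹' V) := hU.inter (hV.preimage (by fun_prop))
  exact (hW.measure_pos μ ⟨u, hu, by simpa⟩).trans_le
    (measure_mono fun y hy ↦ ⟨hAU y hy.1, hBV _ hy.2⟩)

variable [T2Space G] [LocallyCompactSpace G] [BorelSpace G] [μ.IsAddHaarMeasure] [μ.InnerRegular]

theorem eventually_nhds_zero_lconvolution_self_pos (hA : Measurable A)
    (hA₀ : 0 < ∫⁻ y, A y ∂μ) (hsymm : ∀ y, A (-y) = A y) :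
    ∀ᶠ z : G in 𝓝 0, 0 < (A ⋆ₗ[μ] A) z := by
  rw [lintegral_pos_iff_support hA] at hA₀
  filter_upwards [eventually_nhds_zero_measure_vadd_inter_pos (measurableSet_support hA) hA₀]
    with z hz
  rw [lconvolution_pos_iff hA hA]
  refine hz.trans_le (measure_mono ?_)
  rintro y ⟨hyz, hy⟩
  refine ⟨hy, ?_⟩
  rw [mem_vadd_set_iff_neg_vadd_mem, vadd_eq_add] at hyz
  simpa [mem_support, ← hsymm (-z + y)] using hyz

end Topological

end AddGroup

section AddCommGroup

variable {G : Type*} [AddCommGroup G] [MeasurableSpace G] [MeasurableAdd₂ G] [MeasurableNeg G]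
  {μ : Measure G} [μ.IsAddLeftInvariant] [μ.IsNegInvariant] {B K : G → ℝ≥0∞}

theorem lconvolution_ne_top_of_le (hK : Measurable K) (hK_int : ∫⁻ z, K z ∂μ ≠ ∞) {c : ℝ≥0∞}
    (hc : c ≠ ∞) (hB : ∀ y, B y ≤ c) (x : G) : (B ⋆ₗ[μ] K) x ≠ ∞ := by
  rw [lconvolution_comm]
  exact ((lconvolution_le_lintegral_mul hK hB x).trans_lt
    (ENNReal.mul_lt_top hK_int.lt_top hc.lt_top)).ne

end AddCommGroup

section NormedSpace

variable {E : Type*} [NormedAddCommGroup E] [NormedSpace ℝ E] [MeasurableSpace E] [BorelSpace E]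
  [FiniteDimensional ℝ E] {μ : Measure E} [μ.IsAddHaarMeasure] {A : E → ℝ≥0∞}

theorem exists_iterate_lconvolution_pos_on_ball (hA : Measurable A) (hA₀ : 0 < ∫⁻ y, A y ∂μ)
    (hsymm : ∀ y, A (-y) = A y) :
    ∃ ε > 0, ∀ m : ℕ, ∀ z ∈ ball (0 : E) ((m + 1) * ε), 0 < (A ⋆ₗ[μ] ·)^[2 * m + 1] A z := by
  obtain ⟨ε, hε, hAA⟩ := Metric.eventually_nhds_iff_ball.1
    (eventually_nhds_zero_lconvolution_self_pos hA hA₀ hsymm (μ := μ))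
  refine ⟨ε, hε, fun m ↦ ?_⟩
  induction m with
  | zero => simpa using hAA
  | succ m ih =>
    intro z hz
    have hballs : ball (0 : E) ε + ball 0 ((m + 1) * ε) = ball 0 (((m + 1 : ℕ) + 1) * ε) := by
      rw [ball_add_ball hε (by positivity), add_zero]
      push_cast
      ring_nf
    rw [show 2 * (m + 1) + 1 = 2 * m + 1 + 1 + 1 by ring, iterate_succ_apply', iterate_succ_apply',
      lconvolution_assoc hA hA (measurable_iterate_lconvolution hA hA _)]
    exact lconvolution_pos_of_mem_add (measurable_lconvolution μ hA hA)
      (measurable_iterate_lconvolution hA hA _) isOpen_ball isOpen_ball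
      (fun u hu ↦ (hAA u hu).ne') (fun v hv ↦ (ih v hv).ne') (hballs ▸ hz)

theorem exists_lconvolution_iterate_lconvolution_pos (hA : Measurable A)
    (hA₀ : 0 < ∫⁻ y, A y ∂μ) (hsymm : ∀ y, A (-y) = A y) {B : E → ℝ≥0∞} (hB : Measurable B)
    (hB₀ : 0 < ∫⁻ y, B y ∂μ) (x : E) : ∃ n, 0 < (B ⋆ₗ[μ] (A ⋆ₗ[μ] ·)^[n] A) x := by
  obtain ⟨ε, hε, hpos⟩ := exists_iterate_lconvolution_pos_on_ball hA hA₀ hsymm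
  have hcover : ⋃ m : ℕ, ball (0 : E) ((m + 1) * ε) = univ := by
    refine eq_univ_of_forall fun z ↦ mem_iUnion.2 ?_
    obtain ⟨m, hm⟩ := exists_nat_gt (‖z‖ / ε)
    refine ⟨m, mem_ball_zero_iff.2 ?_⟩
    rw [div_lt_iff₀ hε] at hm
    linarith
  obtain ⟨m, hm⟩ := exists_lconvolution_pos hB hB₀
    (fun m ↦ measurable_iterate_lconvolution hA hA (2 * m + 1)) hcover
    (fun m z hz ↦ (hpos m z hz).ne') x
  exact ⟨_, hm⟩

end NormedSpace

section Euclidean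

variable {d : ℕ}

theorem conv_toReal_eq_toReal_lconvolution {A : EuclideanSpace ℝ (Fin d) → ℝ≥0∞}
    (hA : Measurable A) (hA_ne_top : ∀ z, A z ≠ ∞) {b : EuclideanSpace ℝ (Fin d) → ℝ}
    (hb : Measurable b) (hb₀ : ∀ y, 0 ≤ b y) (x : EuclideanSpace ℝ (Fin d)) :
    conv (fun z ↦ (A z).toReal) b x = (((ENNReal.ofReal ∘ b) ⋆ₗ A) x).toReal := by
  rw [conv, integral_eq_lintegral_of_nonneg_ae
    (Eventually.of_forall fun y ↦ mul_nonneg ENNReal.toReal_nonneg (hb₀ y)) (by fun_prop)]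
  congr 1
  refine lintegral_congr fun y ↦ ?_
  rw [ENNReal.ofReal_mul ENNReal.toReal_nonneg, ENNReal.ofReal_toReal (hA_ne_top _), mul_comm,
    neg_add_eq_sub, comp_apply]

theorem convIter_eq_toReal_iterate {f : EuclideanSpace ℝ (Fin d) → ℝ} (hf : Measurable f)
    (hf₀ : ∀ y, 0 ≤ f y) {C : ℝ} (hC : ∀ y, f y ≤ C) (hf_int : ∫⁻ y, ENNReal.ofReal (f y) < ∞)
    (n : ℕ) :
    convIter f n = fun x ↦ (((ENNReal.ofReal ∘ f) ⋆ₗ ·)^[n] (ENNReal.ofReal ∘ f) x).toReal := by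
  have hF : Measurable (ENNReal.ofReal ∘ f) := hf.ennreal_ofReal
  induction n with
  | zero => funext x; simp [convIter, hf₀ x]
  | succ n ih =>
    funext x
    simp only [convIter, ih]
    rw [conv_toReal_eq_toReal_lconvolution (measurable_iterate_lconvolution hF hF n)
      (iterate_lconvolution_ne_top hF hf_int.ne ENNReal.ofReal_ne_top
        (fun y ↦ ENNReal.ofReal_le_ofReal (hC y)) n) hf hf₀, iterate_succ_apply']

end Euclidean

theorem convPow_conv_pos_general {d : ℕ} (f g : EuclideanSpace ℝ (Fin d) → ℝ)
    (hmeas : Measurable f) (hbdd : ∃ C : ℝ, ∀ y, f y ≤ C)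
    (hnonneg : ∀ y, 0 ≤ f y)
    (hpos : 0 < ∫⁻ y, ENNReal.ofReal (f y))
    (hfin : (∫⁻ y, ENNReal.ofReal (f y)) < ⊤)
    (hsymm : ∀ y, f (-y) = f y)
    (hgmeas : Measurable g) (hgbdd : ∃ C : ℝ, ∀ y, g y ≤ C)
    (hgnonneg : ∀ y, 0 ≤ g y)
    (hgpos : 0 < ∫⁻ y, ENNReal.ofReal (g y)) :
    ∀ x : EuclideanSpace ℝ (Fin d), ∃ n : ℕ, 1 ≤ n ∧ 0 < conv (convPow f n) g x := by
  intro x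
  obtain ⟨C, hC⟩ := hbdd
  obtain ⟨Cg, hCg⟩ := hgbdd
  set F := ENNReal.ofReal ∘ f
  have hF : Measurable F := hmeas.ennreal_ofReal
  obtain ⟨n, hn⟩ := exists_lconvolution_iterate_lconvolution_pos hF hpos
    (fun y ↦ by simp [F, hsymm]) hgmeas.ennreal_ofReal hgpos x
  have h_ne_top : ((ENNReal.ofReal ∘ g) ⋆ₗ (F ⋆ₗ ·)^[n] F) x ≠ ∞ := by
    refine lconvolution_ne_top_of_le (measurable_iterate_lconvolution hF hF n) ?_
      ENNReal.ofReal_ne_top (fun y ↦ ENNReal.ofReal_le_ofReal (hCg y)) x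
    rw [lintegral_iterate_lconvolution hF hF]
    exact ENNReal.mul_ne_top (ENNReal.pow_ne_top hfin.ne) hfin.ne
  refine ⟨n + 1, by omega, ?_⟩
  rw [convPow, Nat.add_sub_cancel, convIter_eq_toReal_iterate hmeas hnonneg hC hfin,
    conv_toReal_eq_toReal_lconvolution (measurable_iterate_lconvolution hF hF n)
      (iterate_lconvolution_ne_top hF hfin.ne ENNReal.ofReal_ne_top
        (fun y ↦ ENNReal.ofReal_le_ofReal (hC y)) n) hgmeas hgnonneg]
  exact ENNReal.toReal_pos hn.ne' h_ne_top

/-- If `f : ℝ^d → ℝ` is bounded, measurable, nonnegative, symmetric with positive finite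
integral, and `g` is bounded, measurable, nonnegative with positive integral, then for every
`x` there is some `n ≥ 1` with `(f^{*n} * g)(x) > 0`. -/
theorem convPow_conv_pos {d : ℕ} (hd : 1 ≤ d) (f g : EuclideanSpace ℝ (Fin d) → ℝ)
    (hmeas : Measurable f) (hbdd : ∃ C : ℝ, ∀ y, f y ≤ C)
    (hnonneg : ∀ y, 0 ≤ f y)
    (hpos : 0 < ∫⁻ y, ENNReal.ofReal (f y))
    (hfin : (∫⁻ y, ENNReal.ofReal (f y)) < ⊤)
    (hsymm : ∀ y, f (-y) = f y)
    (hgmeas : Measurable g) (hgbdd : ∃ C : ℝ, ∀ y, g y ≤ C)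
    (hgnonneg : ∀ y, 0 ≤ g y)
    (hgpos : 0 < ∫⁻ y, ENNReal.ofReal (g y)) :
    ∀ x : EuclideanSpace ℝ (Fin d), ∃ n : ℕ, 1 ≤ n ∧ 0 < conv (convPow f n) g x :=
  convPow_conv_pos_general f g hmeas hbdd hnonneg hpos hfin hsymm hgmeas hgbdd hgnonneg hgpos
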